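/- arXiv:2207.13619 — 3 statements merged into one kernel-verified Lean document; each statement's English description precedes it below -/
import Mathlib

section
/- Let P be a finite nonempty set of points and R a finite set of rays in ℝⁿ, and suppose the pair (α, β) ∈ ℝⁿ × ℝ is an extreme ray of the polyhedral cone {(α, β) : α·p ≥ β for all p ∈ P, α·r ≥ 0 for all r ∈ R}. If α ≠ 0 and conv(P) + cone(R) is full-dimensional, then the inequality α·x ≥ β defines a facet of conv(P) + cone(R), i.e., the set of points of conv(P)+cone(R) satisfying α·x = β has affine dimension n−1. -/
open Pointwise

noncomputable section

/-- Dot product on `ℝⁿ`. -/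
def dot {n : ℕ} (a x : Fin n → ℝ) : ℝ := ∑ i, a i * x i

/-- Conical (nonnegative) hull of a set of rays. -/
def coneHull {n : ℕ} (R : Set (Fin n → ℝ)) : Set (Fin n → ℝ) :=
  {y | ∃ (s : Finset (Fin n → ℝ)) (c : (Fin n → ℝ) → ℝ),
      ↑s ⊆ R ∧ (∀ r ∈ s, 0 ≤ c r) ∧ y = ∑ r ∈ s, c r • r}

/-- The point-ray hull `conv(P) + cone(R)` (Minkowski sum). -/
def pointRayHull {n : ℕ} (P R : Set (Fin n → ℝ)) : Set (Fin n → ℝ) :=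
  convexHull ℝ P + coneHull R

/-- A polyhedron: intersection of finitely many halfspaces. -/
def IsPolyhedron {n : ℕ} (S : Set (Fin n → ℝ)) : Prop :=
  ∃ (m : ℕ) (A : Fin m → (Fin n → ℝ)) (b : Fin m → ℝ),
    S = {x | ∀ i, b i ≤ dot (A i) x}

/-- Recession cone of a set. -/
def recessionCone {n : ℕ} (S : Set (Fin n → ℝ)) : Set (Fin n → ℝ) :=
  {r | ∀ x ∈ S, ∀ t : ℝ, 0 ≤ t → x + t • r ∈ S}

/-- A set is pointed if its recession cone contains no line. -/
def IsPointed {n : ℕ} (S : Set (Fin n → ℝ)) : Prop :=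
  ∀ r ∈ recessionCone S, -r ∈ recessionCone S → r = 0

/-- `x` generates an extreme ray of the cone `C`: it is a nonzero element of `C` that
cannot be written as a sum of two elements of `C` not both parallel to it. -/
def IsExtremeRay {V : Type*} [AddCommGroup V] [Module ℝ V] (C : Set V) (x : V) : Prop :=
  x ∈ C ∧ x ≠ 0 ∧ ∀ y ∈ C, ∀ z ∈ C, x = y + z →
    (∃ t : ℝ, 0 ≤ t ∧ y = t • x) ∧ (∃ t : ℝ, 0 ≤ t ∧ z = t • x)

/-- Affine dimension of a subset of `ℝⁿ`. -/
def affDim {n : ℕ} (S : Set (Fin n → ℝ)) : ℕ :=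
  Module.finrank ℝ (affineSpan ℝ S).direction

/-!
If a direction `(γ, δ)` satisfies with equality every inequality of the cut cone that `(α, β)`
satisfies with equality, then `(α, β) ± t (γ, δ)` stay in the cone for small `t > 0`, because the
remaining inequalities are strict and there are finitely many; extremality then forces `(γ, δ)`
to be parallel to `(α, β)`. Applied to `(0, 1)`, this gives a point `p₀ ∈ P` with `α·p₀ = β`.
Let `F` be the set of points of `conv P + cone R` with `α·x = β`; it lies in a hyperplane, so
`dim F ≤ n - 1`. If `dim F ≤ n - 2`, some `γ` orthogonal to the directions of `F` is not parallel
to `α`, and `γ·x = δ` is constant on `F`. Every tight `p ∈ P` lies in `F`, and for every `r ∈ R`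
with `α·r = 0` so does `p₀ + r`; hence `(γ, δ)` is tight wherever `(α, β)` is, a contradiction.
-/

open Filter Topology Module

theorem add_mem_coneHull {n : ℕ} {R : Set (Fin n → ℝ)} {y r : Fin n → ℝ}
    (hy : y ∈ coneHull R) (hr : r ∈ R) : y + r ∈ coneHull R := by
  classical
  obtain ⟨s, c, hsR, hc, rfl⟩ := hy
  refine ⟨insert r s, fun x => (if x ∈ s then c x else 0) + if x = r then 1 else 0, ?_, ?_, ?_⟩
  · simpa [Set.insert_subset_iff] using ⟨hr, hsR⟩
  · intro x _
    refine add_nonneg ?_ (by split_ifs <;> norm_num)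
    split_ifs with hx
    exacts [hc x hx, le_rfl]
  · simp [add_smul, Finset.sum_add_distrib, ite_smul, Finset.sum_ite_mem,
      Finset.inter_eq_right.mpr (Finset.subset_insert r s)]

theorem mem_pointRayHull_of_mem {n : ℕ} {P R : Set (Fin n → ℝ)} {p : Fin n → ℝ} (hp : p ∈ P) :
    p ∈ pointRayHull P R :=
  ⟨p, subset_convexHull ℝ P hp, 0, ⟨∅, 0, by simp, by simp, by simp⟩, add_zero p⟩

theorem add_mem_pointRayHull {n : ℕ} {P R : Set (Fin n → ℝ)} {x r : Fin n → ℝ}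
    (hx : x ∈ pointRayHull P R) (hr : r ∈ R) : x + r ∈ pointRayHull P R := by
  obtain ⟨c, hc, y, hy, rfl⟩ := hx
  exact ⟨c, hc, y + r, add_mem_coneHull hy hr, (add_assoc c y r).symm⟩

section ExtremeRay

variable {V : Type*} [AddCommGroup V] [Module ℝ V] {C : Set V} {x v : V}

theorem IsExtremeRay.exists_eq_smul_of_add_mem_of_sub_mem (hx : IsExtremeRay C x)
    (hC : ∀ q ∈ C, ∀ t : ℝ, 0 ≤ t → t • q ∈ C) (hadd : x + v ∈ C) (hsub : x - v ∈ C) :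
    ∃ c : ℝ, v = c • x := by
  obtain ⟨⟨t, -, ht⟩, -⟩ := hx.2.2 _ (hC _ hadd 2⁻¹ (by norm_num)) _
    (hC _ hsub 2⁻¹ (by norm_num)) (by module)
  exact ⟨2 * t - 1, by rw [sub_smul, mul_smul, ← ht]; module⟩

theorem IsExtremeRay.exists_eq_smul_of_eventually_add_smul_mem (hx : IsExtremeRay C x)
    (hC : ∀ q ∈ C, ∀ t : ℝ, 0 ≤ t → t • q ∈ C) (hv : ∀ᶠ t in 𝓝 (0 : ℝ), x + t • v ∈ C) :
    ∃ c : ℝ, v = c • x := by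
  have hneg : ∀ᶠ t in 𝓝 (0 : ℝ), x + (-t) • v ∈ C :=
    (continuous_neg.tendsto' (0 : ℝ) 0 neg_zero).eventually hv
  obtain ⟨t, ⟨hadd, hsub⟩, ht⟩ :=
    ((hv.and hneg).filter_mono nhdsWithin_le_nhds |>.and
      (eventually_mem_nhdsWithin (s := {0}ᶜ))).exists
  obtain ⟨c, hc⟩ := hx.exists_eq_smul_of_add_mem_of_sub_mem hC hadd
    (by rwa [neg_smul, ← sub_eq_add_neg] at hsub)
  refine ⟨t⁻¹ * c, ?_⟩
  rw [mul_smul, ← hc, inv_smul_smul₀ ht]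

end ExtremeRay

theorem eventually_nonneg_add_mul {a b : ℝ} (ha : 0 ≤ a) (hb : a = 0 → b = 0) :
    ∀ᶠ t in 𝓝 (0 : ℝ), 0 ≤ a + t * b := by
  rcases ha.eq_or_lt with rfl | ha
  · simp [hb rfl]
  have : Tendsto (fun t : ℝ => a + t * b) (𝓝 0) (𝓝 a) := by
    simpa using ((continuous_mul_const b).tendsto' 0 0 (zero_mul b)).const_add a
  exact (this.eventually (lt_mem_nhds ha)).mono fun _ => le_of_lt

section CutCone

variable {ι : Type*} [Fintype ι]

def cutCone (P R : Set (ι → ℝ)) : Set ((ι → ℝ) × ℝ) :=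
  {q | (∀ p ∈ P, q.2 ≤ q.1 ⬝ᵥ p) ∧ ∀ r ∈ R, 0 ≤ q.1 ⬝ᵥ r}

variable {P R : Set (ι → ℝ)} {q d : (ι → ℝ) × ℝ}

theorem smul_mem_cutCone (hq : q ∈ cutCone P R) {t : ℝ} (ht : 0 ≤ t) : t • q ∈ cutCone P R := by
  refine ⟨fun p hp => ?_, fun r hr => ?_⟩
  · simpa [smul_dotProduct] using mul_le_mul_of_nonneg_left (hq.1 p hp) ht
  · simpa [smul_dotProduct] using mul_nonneg ht (hq.2 r hr)

theorem eventually_add_smul_mem_cutCone (hPfin : P.Finite) (hRfin : R.Finite)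
    (hq : q ∈ cutCone P R) (hP : ∀ p ∈ P, q.1 ⬝ᵥ p = q.2 → d.1 ⬝ᵥ p = d.2)
    (hR : ∀ r ∈ R, q.1 ⬝ᵥ r = 0 → d.1 ⬝ᵥ r = 0) :
    ∀ᶠ t in 𝓝 (0 : ℝ), q + t • d ∈ cutCone P R := by
  have hP' : ∀ᶠ t in 𝓝 (0 : ℝ), ∀ p ∈ P,
      0 ≤ (q.1 ⬝ᵥ p - q.2) + t * (d.1 ⬝ᵥ p - d.2) :=
    hPfin.eventually_all.mpr fun p hp => eventually_nonneg_add_mul (sub_nonneg.mpr (hq.1 p hp))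
      fun h => sub_eq_zero.mpr (hP p hp (sub_eq_zero.mp h))
  have hR' : ∀ᶠ t in 𝓝 (0 : ℝ), ∀ r ∈ R, 0 ≤ q.1 ⬝ᵥ r + t * d.1 ⬝ᵥ r :=
    hRfin.eventually_all.mpr fun r hr => eventually_nonneg_add_mul (hq.2 r hr) (hR r hr)
  filter_upwards [hP', hR'] with t htP htR
  refine ⟨fun p hp => ?_, fun r hr => ?_⟩
  · have := htP p hp
    simp only [Prod.fst_add, Prod.snd_add, Prod.smul_fst, Prod.smul_snd, add_dotProduct,
      smul_dotProduct, smul_eq_mul]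
    linarith
  · simpa [add_dotProduct, smul_dotProduct] using htR r hr

theorem IsExtremeRay.exists_eq_smul_of_tight (hPfin : P.Finite) (hRfin : R.Finite)
    (hq : IsExtremeRay (cutCone P R) q) (hP : ∀ p ∈ P, q.1 ⬝ᵥ p = q.2 → d.1 ⬝ᵥ p = d.2)
    (hR : ∀ r ∈ R, q.1 ⬝ᵥ r = 0 → d.1 ⬝ᵥ r = 0) : ∃ c : ℝ, d = c • q :=
  hq.exists_eq_smul_of_eventually_add_smul_mem (fun _ hq' _ ht => smul_mem_cutCone hq' ht)
    (eventually_add_smul_mem_cutCone hPfin hRfin hq.1 hP hR)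

theorem IsExtremeRay.exists_mem_dotProduct_eq (hPfin : P.Finite) (hRfin : R.Finite)
    {α : ι → ℝ} {β : ℝ} (hray : IsExtremeRay (cutCone P R) (α, β)) (hα : α ≠ 0) :
    ∃ p ∈ P, α ⬝ᵥ p = β := by
  by_contra! h
  obtain ⟨c, hc⟩ := hray.exists_eq_smul_of_tight (d := (0, 1)) hPfin hRfin
    (fun p hp hpβ => absurd hpβ (h p hp)) (fun _ _ _ => zero_dotProduct _)
  obtain ⟨hc0, hc1⟩ := Prod.ext_iff.mp hc
  rcases smul_eq_zero.mp hc0.symm with rfl | hα0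
  · simp at hc1
  · exact hα hα0

end CutCone

theorem exists_dotProduct_eq_zero_notMem_span {K ι : Type*} [Field K] [Fintype ι]
    (L : Submodule K (ι → K)) (a : ι → K)
    (hL : finrank K L + 2 ≤ Fintype.card ι) :
    ∃ γ : ι → K, (∀ v ∈ L, γ ⬝ᵥ v = 0) ∧ γ ∉ K ∙ a := by
  classical
  let W := L.dualAnnihilator.map (dotProductEquiv K ι).symm.toLinearMap
  have hW : finrank K W + finrank K L = Fintype.card ι := by
    rw [LinearEquiv.finrank_map_eq, add_comm,
      Subspace.finrank_add_finrank_dualAnnihilator_eq, Module.finrank_fintype_fun_eq_card]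
  have ha : finrank K (K ∙ a) ≤ 1 := by
    simpa using finrank_span_le_card (R := K) ({a} : Set (ι → K))
  obtain ⟨γ, hγW, hγa⟩ := SetLike.not_le_iff_exists.mp fun hle : W ≤ K ∙ a =>
    by have := Submodule.finrank_mono hle; omega
  rw [Submodule.mem_map_equiv, LinearEquiv.symm_symm, Submodule.mem_dualAnnihilator] at hγW
  exact ⟨γ, hγW, hγa⟩

theorem dotProduct_eq_zero_of_mem_vectorSpan {K ι : Type*} [Field K] [Fintype ι]
    {F : Set (ι → K)} {a : ι → K} {b : K} (hF : ∀ x ∈ F, a ⬝ᵥ x = b) {v : ι → K}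
    (hv : v ∈ vectorSpan K F) : a ⬝ᵥ v = 0 := by
  classical
  refine (Submodule.span_le (p := LinearMap.ker (dotProductEquiv K ι a))).mpr ?_ hv
  rintro _ ⟨x, hx, y, hy, rfl⟩
  simp [dotProduct_sub, hF x hx, hF y hy]

theorem finrank_vectorSpan_lt_of_forall_dotProduct_eq {ι : Type*} [Fintype ι]
    {F : Set (ι → ℝ)} {a : ι → ℝ} {b : ℝ} (ha : a ≠ 0) (hF : ∀ x ∈ F, a ⬝ᵥ x = b) :
    finrank ℝ (vectorSpan ℝ F) < Fintype.card ι := by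
  rw [← Module.finrank_fintype_fun_eq_card (R := ℝ)]
  refine Submodule.finrank_lt fun htop => ha ?_
  exact dotProduct_self_eq_zero.mp
    (dotProduct_eq_zero_of_mem_vectorSpan hF (htop ▸ Submodule.mem_top))

theorem stmt_1_general {n : ℕ} (P R : Set (Fin n → ℝ)) (hPfin : P.Finite)
    (hRfin : R.Finite) (α : Fin n → ℝ) (β : ℝ)
    (hray : IsExtremeRay
      {q : (Fin n → ℝ) × ℝ | (∀ p ∈ P, q.2 ≤ dot q.1 p) ∧ ∀ r ∈ R, 0 ≤ dot q.1 r} (α, β))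
    (hα : α ≠ 0) :
    affDim (pointRayHull P R ∩ {x | dot α x = β}) = n - 1 := by
  change IsExtremeRay (cutCone P R) (α, β) at hray
  set F := pointRayHull P R ∩ {x | dot α x = β}
  obtain ⟨p₀, hp₀, hp₀β⟩ := hray.exists_mem_dotProduct_eq hPfin hRfin hα
  have hp₀F : p₀ ∈ F := ⟨mem_pointRayHull_of_mem hp₀, hp₀β⟩
  have hlt : finrank ℝ (vectorSpan ℝ F) < n := by
    simpa using finrank_vectorSpan_lt_of_forall_dotProduct_eq hα fun x hx => hx.2
  have hnot_le : ¬ finrank ℝ (vectorSpan ℝ F) + 2 ≤ n := by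
    intro hle
    obtain ⟨γ, hγ, hγα⟩ :=
      exists_dotProduct_eq_zero_notMem_span (vectorSpan ℝ F) α (by simpa using hle)
    have hγF : ∀ x ∈ F, γ ⬝ᵥ x = γ ⬝ᵥ p₀ := fun x hx => by
      have := hγ _ (vsub_mem_vectorSpan ℝ hx hp₀F)
      rwa [vsub_eq_sub, dotProduct_sub, sub_eq_zero] at this
    obtain ⟨c, hc⟩ := hray.exists_eq_smul_of_tight (d := (γ, γ ⬝ᵥ p₀)) hPfin hRfin
      (fun p hp hpβ => hγF p ⟨mem_pointRayHull_of_mem hp, hpβ⟩)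
      fun r hr hr0 => by
        have hrα : α ⬝ᵥ (p₀ + r) = β := by
          rw [dotProduct_add, hp₀β, show α ⬝ᵥ r = 0 from hr0, add_zero]
        have hrF : p₀ + r ∈ F := ⟨add_mem_pointRayHull hp₀F.1 hr, hrα⟩
        simpa [dotProduct_add] using hγF _ hrF
    exact hγα (Submodule.mem_span_singleton.mpr ⟨c, (congrArg Prod.fst hc).symm⟩)
  rw [affDim, direction_affineSpan]
  omega

/-- If `(α, β)` generates an extreme ray of the cut cone
`{(α, β) : α·p ≥ β ∀ p ∈ P, α·r ≥ 0 ∀ r ∈ R}`, `α ≠ 0`, and the point-ray hull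
`conv(P) + cone(R)` is full-dimensional, then `α·x ≥ β` defines a facet of the point-ray hull:
the set of its points satisfying `α·x = β` has affine dimension `n − 1`. -/
theorem stmt_1 {n : ℕ} (P R : Set (Fin n → ℝ)) (hPfin : P.Finite) (hPne : P.Nonempty)
    (hRfin : R.Finite) (α : Fin n → ℝ) (β : ℝ)
    (hray : IsExtremeRay
      {q : (Fin n → ℝ) × ℝ | (∀ p ∈ P, q.2 ≤ dot q.1 p) ∧ ∀ r ∈ R, 0 ≤ dot q.1 r} (α, β))
    (hα : α ≠ 0)
    (hfull : affDim (pointRayHull P R) = n) :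
    affDim (pointRayHull P R ∩ {x | dot α x = β}) = n - 1 :=
  stmt_1_general P R hPfin hRfin α β hray hα
end
end

section
/- For each term t of a disjunction, let pᵗ be an optimal vertex of min{c·x : x ∈ Pᵗ} and Cᵗ ⊇ Pᵗ the basis cone at pᵗ (a simplicial cone with apex pᵗ containing Pᵗ whose extreme rays are the n edge directions at pᵗ). Then the simple point-ray collection P⁰ = {pᵗ : t ∈ T}, R⁰ = {extreme ray directions of Cᵗ : t ∈ T} is proper: any inequality valid for all points of P⁰ (with right-hand side β) and all rays of R⁰ (with right-hand side 0) is valid for cl conv(∪_t Pᵗ). -/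
/-!
Each `Pᵗ` lies in its basis cone `pᵗ + cone(r^{t,1}, …, r^{t,n})`, hence in the point-ray hull
`conv(P⁰) + cone(R⁰)`. An inequality valid on the points of `P⁰` and nonnegative on the rays of
`R⁰` is valid on that hull, so the halfspace it defines contains `⋃ₜ Pᵗ`; being closed and convex,
it then contains `cl conv(⋃ₜ Pᵗ)`.
-/

open Pointwise

noncomputable section

section

variable {n : ℕ}

lemma isLinearMap_dot (a : Fin n → ℝ) : IsLinearMap ℝ (dot a) :=
  ⟨dotProduct_add a, fun c x => dotProduct_smul c a x⟩

lemma continuous_dot (a : Fin n → ℝ) : Continuous (dot a) :=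
  continuous_const.dotProduct continuous_id

lemma coneHull_mono {R R' : Set (Fin n → ℝ)} (h : R ⊆ R') : coneHull R ⊆ coneHull R' := by
  rintro y ⟨s, c, hs, hc, rfl⟩
  exact ⟨s, c, hs.trans h, hc, rfl⟩

lemma dot_nonneg_of_mem_coneHull {a : Fin n → ℝ} {R : Set (Fin n → ℝ)}
    (hR : ∀ v ∈ R, 0 ≤ dot a v) {y : Fin n → ℝ} (hy : y ∈ coneHull R) : 0 ≤ dot a y := by
  obtain ⟨s, c, hs, hc, rfl⟩ := hy
  have hsum : dot a (∑ v ∈ s, c v • v) = ∑ v ∈ s, c v * dot a v := by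
    change a ⬝ᵥ _ = ∑ v ∈ s, c v * a ⬝ᵥ v
    simp only [dotProduct_sum, dotProduct_smul, smul_eq_mul]
  rw [hsum]
  exact Finset.sum_nonneg fun v hv => mul_nonneg (hc v hv) (hR v (hs hv))

lemma pointRayHull_subset_halfSpace {a : Fin n → ℝ} {β : ℝ} {P R : Set (Fin n → ℝ)}
    (hP : ∀ q ∈ P, β ≤ dot a q) (hR : ∀ v ∈ R, 0 ≤ dot a v) :
    pointRayHull P R ⊆ {x | β ≤ dot a x} := by
  rintro _ ⟨q, hq, y, hy, rfl⟩
  have hq' : β ≤ dot a q :=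
    convexHull_min hP (convex_halfSpace_ge (isLinearMap_dot a) β) hq
  have hy' := dot_nonneg_of_mem_coneHull hR hy
  show β ≤ dot a (q + y)
  rw [(isLinearMap_dot a).map_add]
  linarith

lemma closure_convexHull_subset_halfSpace {a : Fin n → ℝ} {β : ℝ} {S : Set (Fin n → ℝ)}
    (hS : S ⊆ {x | β ≤ dot a x}) : closure (convexHull ℝ S) ⊆ {x | β ≤ dot a x} :=
  closure_minimal (convexHull_min hS (convex_halfSpace_ge (isLinearMap_dot a) β))
    (isClosed_le continuous_const (continuous_dot a))

lemma iUnion_subset_pointRayHull {T : Type*} {Pt : T → Set (Fin n → ℝ)} {p : T → Fin n → ℝ}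
    {r : T → Fin n → Fin n → ℝ} (hcont : ∀ t, Pt t ⊆ {p t} + coneHull (Set.range (r t))) :
    ⋃ t, Pt t ⊆ pointRayHull (Set.range p) (⋃ t, Set.range (r t)) := by
  refine Set.iUnion_subset fun t x hx => ?_
  obtain ⟨_, rfl, y, hy, rfl⟩ := hcont t hx
  exact Set.add_mem_add (subset_convexHull ℝ _ (Set.mem_range_self t))
    (coneHull_mono (Set.subset_iUnion (fun t => Set.range (r t)) t) hy)

end

theorem stmt_5_general {n : ℕ} {T : Type*}
    (Pt : T → Set (Fin n → ℝ))
    (p : T → (Fin n → ℝ))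
    (r : T → Fin n → (Fin n → ℝ))
    (hcont : ∀ t, Pt t ⊆ {p t} + coneHull (Set.range (r t)))
    (α : Fin n → ℝ) (β : ℝ)
    (hαp : ∀ t, β ≤ dot α (p t))
    (hαr : ∀ t j, 0 ≤ dot α (r t j)) :
    ∀ x ∈ closure (convexHull ℝ (⋃ t, Pt t)), β ≤ dot α x := by
  have hP : ∀ q ∈ Set.range p, β ≤ dot α q := by
    rintro _ ⟨t, rfl⟩
    exact hαp t
  have hR : ∀ v ∈ ⋃ t, Set.range (r t), 0 ≤ dot α v := by
    simp only [Set.mem_iUnion, Set.mem_range]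
    rintro _ ⟨t, j, rfl⟩
    exact hαr t j
  exact closure_convexHull_subset_halfSpace
    ((iUnion_subset_pointRayHull hcont).trans (pointRayHull_subset_halfSpace hP hR))

/-- Simple VPCs are valid: if for each term `t` the point `pᵗ` is a `c`-optimal
vertex of the pointed polyhedron `Pᵗ` and `Cᵗ = pᵗ + cone(r^{t,1},…,r^{t,n})` is a simplicial
basis cone containing `Pᵗ`, then any inequality `α·x ≥ β` with `α·pᵗ ≥ β` for all `t` and
`α·r^{t,j} ≥ 0` for all `t, j` is valid for the disjunctive hull `cl conv(∪ₜ Pᵗ)`. -/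
theorem stmt_5 {n : ℕ} {T : Type*} [Fintype T] (c : Fin n → ℝ)
    (Pt : T → Set (Fin n → ℝ)) (hpoly : ∀ t, IsPolyhedron (Pt t))
    (hne : ∀ t, (Pt t).Nonempty) (hpointed : ∀ t, IsPointed (Pt t))
    (p : T → (Fin n → ℝ)) (hvert : ∀ t, p t ∈ Set.extremePoints ℝ (Pt t))
    (hopt : ∀ t, ∀ x ∈ Pt t, dot c (p t) ≤ dot c x)
    (r : T → Fin n → (Fin n → ℝ))
    (hindep : ∀ t, LinearIndependent ℝ (r t))
    (hcont : ∀ t, Pt t ⊆ {p t} + coneHull (Set.range (r t)))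
    (α : Fin n → ℝ) (β : ℝ)
    (hαp : ∀ t, β ≤ dot α (p t))
    (hαr : ∀ t j, 0 ≤ dot α (r t j)) :
    ∀ x ∈ closure (convexHull ℝ (⋃ t, Pt t)), β ≤ dot α x :=
  stmt_5_general Pt p r hcont α β hαp hαr
end
end

section
/- Let Q ⊆ ℝⁿ be a polyhedron with vertex p, and let K = p + cone(edge directions of Q at p) be the tangent cone of Q at p. If α·x ≥ β is valid for Q and tight at p (α·p = β), then α·x ≥ β is valid for K. -/
open Pointwise

noncomputable section

/-! Walk from `p` towards a point `x` of `K`: constraints slack at `p` remain satisfied for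
small steps by continuity, and constraints tight at `p` remain satisfied for every step because
`x` satisfies them. So `p + ε • (x - p) ∈ Q` for some `ε > 0`, and
`β ≤ α·(p + ε • (x - p)) = β + ε (α·x - β)` forces `β ≤ α·x`. -/

open Filter Topology

theorem LinearMap.map_add_smul_sub {E : Type*} [AddCommGroup E] [Module ℝ E] (f : E →ₗ[ℝ] ℝ)
    (p x : E) (t : ℝ) : f (p + t • (x - p)) = f p + t * (f x - f p) := by
  rw [map_add, map_smul, map_sub, smul_eq_mul]

theorem eventually_le_add_mul_sub {c u v : ℝ} (hu : c ≤ u) (hv : u = c → c ≤ v) :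
    ∀ᶠ t in 𝓝[>] (0 : ℝ), c ≤ u + t * (v - u) := by
  rcases hu.lt_or_eq with hslack | htight
  · have hcont : Tendsto (fun t : ℝ => u + t * (v - u)) (𝓝 0) (𝓝 u) := by
      simpa using ((tendsto_id (x := 𝓝 (0 : ℝ))).mul_const (v - u)).const_add u
    exact nhdsWithin_le_nhds ((hcont.eventually (lt_mem_nhds hslack)).mono fun _ => le_of_lt)
  · subst htight
    filter_upwards [self_mem_nhdsWithin] with t ht
    nlinarith [hv rfl, Set.mem_Ioi.mp ht]

theorem exists_pos_add_smul_sub_mem_of_tight {ι E : Type*} [Finite ι] [AddCommGroup E]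
    [Module ℝ E] (a : ι → E →ₗ[ℝ] ℝ) (b : ι → ℝ) {p x : E} (hp : ∀ i, b i ≤ a i p)
    (hx : ∀ i, a i p = b i → b i ≤ a i x) :
    ∃ ε : ℝ, 0 < ε ∧ ∀ i, b i ≤ a i (p + ε • (x - p)) := by
  have hall : ∀ᶠ t in 𝓝[>] (0 : ℝ), ∀ i, b i ≤ a i (p + t • (x - p)) :=
    eventually_all.mpr fun i => by
      simpa only [LinearMap.map_add_smul_sub] using eventually_le_add_mul_sub (hp i) (hx i)
  obtain ⟨ε, hmem, hε⟩ := (hall.and self_mem_nhdsWithin).exists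
  exact ⟨ε, hε, hmem⟩

/-- Let `Q = {x : Ax ≥ b}` be a polyhedron with vertex `p`, and let
`K = {x : aᵢ·x ≥ bᵢ for all i tight at p}` be the tangent cone of `Q` at `p`. Any inequality
`α·x ≥ β` valid for `Q` and tight at `p` is valid for `K`. -/
theorem stmt_14 {n m : ℕ} (A : Fin m → (Fin n → ℝ)) (b : Fin m → ℝ)
    (Q : Set (Fin n → ℝ)) (hQ : Q = {x | ∀ i, b i ≤ dot (A i) x})
    (p : Fin n → ℝ) (hp : p ∈ Set.extremePoints ℝ Q)
    (K : Set (Fin n → ℝ))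
    (hK : K = {x | ∀ i, dot (A i) p = b i → b i ≤ dot (A i) x})
    (α : Fin n → ℝ) (β : ℝ)
    (hvalid : ∀ x ∈ Q, β ≤ dot α x) (htight : dot α p = β) :
    ∀ x ∈ K, β ≤ dot α x := by
  subst hQ hK
  intro x hx
  obtain ⟨ε, hε, hmem⟩ :=
    exists_pos_add_smul_sub_mem_of_tight (fun i => dotProductBilin ℝ ℝ (A i)) b hp.1 hx
  have hαy : β ≤ β + ε * (dot α x - β) := by
    have hdot : ∀ y, dot α y = dotProductBilin ℝ ℝ α y := fun _ => rfl
    have := hvalid _ hmem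
    rwa [hdot, LinearMap.map_add_smul_sub, ← hdot, ← hdot, htight] at this
  nlinarith
end
end
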